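/- Let ℓ ≥ 2, let (λ•, s) be a charged r-multipartition, fix i ∈ ℤ/ℓℤ, and let s_i·λ• be the r-multipartition obtained from λ• by removing all removable i-nodes and adding all addable i-nodes of (λ•, s). Then, with d = Res_ℓ(λ•, s): Res_ℓ(s_i·λ•, s)_j = d_j for all j ≠ i, and Res_ℓ(s_i·λ•, s)_i = d_{i−1} + d_{i+1} − d_i + w^s_i. (That is, the residue map is equivariant for the Weyl group generator s_i, acting on residue vectors by the dot action.) -/
import Mathlib


/-- A partition: a non-increasing function `ℕ → ℕ` that is eventually zero. -/
def IsPartition (f : ℕ → ℕ) : Prop :=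
  (∀ m n : ℕ, m ≤ n → f n ≤ f m) ∧ ∃ N : ℕ, ∀ n : ℕ, N ≤ n → f n = 0

/-- The Young diagram of `f`: the set of pairs `(a,b)` with `a < f b`. -/
def young (f : ℕ → ℕ) : Set (ℕ × ℕ) := {p : ℕ × ℕ | p.1 < f p.2}

/-- A node `p` of `f` is removable if deleting it leaves the Young diagram of a
partition. -/
def IsRemovable (f : ℕ → ℕ) (p : ℕ × ℕ) : Prop :=
  p ∈ young f ∧ ∃ g : ℕ → ℕ, IsPartition g ∧ young g = young f \ {p}

/-- A pair `p ∉ Y(f)` is an addable node if adding it gives the Young diagram of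
a partition. -/
def IsAddable (f : ℕ → ℕ) (p : ℕ × ℕ) : Prop :=
  p ∉ young f ∧ ∃ g : ℕ → ℕ, IsPartition g ∧ young g = young f ∪ {p}

/-- The residue `b - a + k ∈ ℤ/ℓℤ` of a node `p = (a,b)` with charge `k`. -/
def nodeRes (ℓ : ℕ) (k : ZMod ℓ) (p : ℕ × ℕ) : ZMod ℓ :=
  (p.2 : ZMod ℓ) - (p.1 : ZMod ℓ) + k

/-- Nodes `(a,b,c)` of an `r`-multipartition: `a < λ^c_b`. -/
def mNodes {r : ℕ} (Λ : Fin r → ℕ → ℕ) : Set (ℕ × ℕ × Fin r) :=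
  {q : ℕ × ℕ × Fin r | q.1 < Λ q.2.2 q.2.1}

/-- The residue vector: `(mRes ℓ Λ s i)` is the number of nodes of `Λ` of
residue `i` with respect to the multicharge `s`. -/
noncomputable def mRes (ℓ : ℕ) {r : ℕ} (Λ : Fin r → ℕ → ℕ) (s : Fin r → ZMod ℓ) (i : ZMod ℓ) : ℤ :=
  ((mNodes Λ ∩ {q : ℕ × ℕ × Fin r | nodeRes ℓ (s q.2.2) (q.1, q.2.1) = i}).ncard : ℤ)

/-- `wMulti ℓ s i = #{j | s_j = i}`. -/
def wMulti (ℓ : ℕ) {r : ℕ} (s : Fin r → ZMod ℓ) (i : ZMod ℓ) : ℤ :=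
  ((Finset.univ.filter fun j : Fin r => s j = i).card : ℤ)

/-- The hub: number of removable `i`-nodes minus number of addable `i`-nodes. -/
noncomputable def hub (ℓ : ℕ) {r : ℕ} (Λ : Fin r → ℕ → ℕ) (s : Fin r → ZMod ℓ) (i : ZMod ℓ) : ℤ :=
  (({q : ℕ × ℕ × Fin r | IsRemovable (Λ q.2.2) (q.1, q.2.1) ∧
      nodeRes ℓ (s q.2.2) (q.1, q.2.1) = i}).ncard : ℤ) -
  (({q : ℕ × ℕ × Fin r | IsAddable (Λ q.2.2) (q.1, q.2.1) ∧
      nodeRes ℓ (s q.2.2) (q.1, q.2.1) = i}).ncard : ℤ)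

/- ======================= auxiliary material ======================= -/

def cnt (ℓ : ℕ) (j t : ZMod ℓ) (m : ℕ) : ℕ :=
  ((Finset.range m).filter fun a : ℕ => t - (a : ZMod ℓ) = j).card

lemma cnt_succ {ℓ : ℕ} (j t : ZMod ℓ) (m : ℕ) :
    cnt ℓ j t (m+1) = cnt ℓ j t m + (if t - (m : ZMod ℓ) = j then 1 else 0) := by
  unfold cnt
  rw [Finset.range_add_one, Finset.filter_insert]
  split
  · rw [Finset.card_insert_of_notMem (by simp)]
  · simp

lemma cnt_sub {ℓ : ℕ} (j t : ZMod ℓ) (m : ℕ) :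
    (cnt ℓ j t m : ℤ) - cnt ℓ (j+1) t m
      = (if t = j then 1 else 0) - (if t - (m : ZMod ℓ) = j then 1 else 0) := by
  induction m with
  | zero => simp [cnt]
  | succ n ih =>
    rw [cnt_succ, cnt_succ]
    push_cast
    have h : (t - (n : ZMod ℓ) = j + 1) ↔ (t - ((n : ZMod ℓ) + 1) = j) := by
      constructor <;> intro h
      · rw [sub_add_eq_sub_sub, h]; ring
      · rw [← h]; ring
    rw [if_congr h rfl rfl]
    linarith [ih]

lemma nodeRes_pred {ℓ : ℕ} (k : ZMod ℓ) (b m : ℕ) (hm : 0 < m) :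
    nodeRes ℓ k (m - 1, b) = ((b : ZMod ℓ) + k - (m : ZMod ℓ)) + 1 := by
  unfold nodeRes
  simp only
  rw [Nat.cast_sub (by omega : 1 ≤ m), Nat.cast_one]
  ring

lemma nodeRes_self {ℓ : ℕ} (k : ZMod ℓ) (b m : ℕ) :
    nodeRes ℓ k (m, b) = (b : ZMod ℓ) + k - (m : ZMod ℓ) := by
  unfold nodeRes; simp only; ring

lemma removable_iff {f : ℕ → ℕ} (hf : IsPartition f) (a b : ℕ) :
    IsRemovable f (a, b) ↔ a + 1 = f b ∧ f (b+1) < f b := by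
  constructor
  · rintro ⟨hmem, g, hg, hyg⟩
    have hab : a < f b := hmem
    have hgb : g b ≤ a := by
      by_contra h
      push_neg at h
      have h2 : ((a, b) : ℕ × ℕ) ∈ young g := h
      rw [hyg] at h2
      exact h2.2 rfl
    constructor
    · by_contra h
      have h1 : a + 1 < f b := by omega
      have h2 : ((a+1, b) : ℕ × ℕ) ∈ young g := by
        rw [hyg]
        exact ⟨h1, by simp⟩
      have h3 : a + 1 < g b := h2
      omega
    · by_contra h
      push_neg at h
      have h2 : ((a, b+1) : ℕ × ℕ) ∈ young g := by
        rw [hyg]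
        exact ⟨show a < f (b+1) by omega, by simp⟩
      have h3 : a < g (b+1) := h2
      have h4 : g (b+1) ≤ g b := hg.1 b (b+1) (by omega)
      omega
  · rintro ⟨ha, hb⟩
    refine ⟨show a < f b by omega, fun n => if n = b then f b - 1 else f n, ⟨?_, ?_⟩, ?_⟩
    · intro m n hmn
      by_cases hm : m = b <;> by_cases hn : n = b <;> simp [hm, hn]
      · have := hf.1 (b+1) n (by omega)
        omega
      · have := hf.1 m b (by omega)
        omega
      · exact hf.1 m n hmn
    · obtain ⟨N, hN⟩ := hf.2
      exact ⟨N + b + 1, fun n hn => by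
        simp only [show n ≠ b by omega, if_false]; exact hN n (by omega)⟩
    · ext ⟨x, y⟩
      by_cases hy : y = b <;>
        simp [young, hy, Prod.ext_iff] <;> omega

lemma addable_iff {f : ℕ → ℕ} (hf : IsPartition f) (a b : ℕ) :
    IsAddable f (a, b) ↔ a = f b ∧ (b = 0 ∨ f b < f (b-1)) := by
  constructor
  · rintro ⟨hmem, g, hg, hyg⟩
    have hab : f b ≤ a := by
      by_contra h; exact hmem (by simpa [young] using by omega : ((a,b) : ℕ × ℕ) ∈ young f)
    have hgb : a < g b := by
      have h2 : ((a,b) : ℕ × ℕ) ∈ young g := by rw [hyg]; right; rfl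
      exact h2
    constructor
    · by_contra h
      have h1 : f b < a := by omega
      have h2 : ((f b, b) : ℕ × ℕ) ∉ young g := by
        rw [hyg]
        rintro (h2 | h2)
        · have : f b < f b := h2; omega
        · simp only [Set.mem_singleton_iff, Prod.mk.injEq] at h2; omega
      have h3 : ¬ (f b < g b) := h2
      omega
    · by_cases hb : b = 0
      · exact Or.inl hb
      · right
        by_contra h
        push_neg at h
        have hmono : f b ≤ f (b-1) := hf.1 (b-1) b (by omega)
        have h2 : ((a, b-1) : ℕ × ℕ) ∉ young g := by
          rw [hyg]
          rintro (h2 | h2)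
          · have : a < f (b-1) := h2; omega
          · simp only [Set.mem_singleton_iff, Prod.mk.injEq] at h2; omega
        have h3 : ¬ (a < g (b-1)) := h2
        have h4 : g b ≤ g (b-1) := hg.1 (b-1) b (by omega)
        omega
  · rintro ⟨ha, hb⟩
    refine ⟨fun h => by { have : a < f b := h; omega },
      fun n => if n = b then f b + 1 else f n, ⟨?_, ?_⟩, ?_⟩
    · intro m n hmn
      by_cases hm : m = b <;> by_cases hn : n = b <;> simp [hm, hn]
      · have := hf.1 b n (by omega)
        omega
      · rcases hb with hb | hb
        · omega
        · have := hf.1 m (b-1) (by omega)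
          omega
      · exact hf.1 m n hmn
    · obtain ⟨N, hN⟩ := hf.2
      exact ⟨N + b + 1, fun n hn => by
        simp only [show n ≠ b by omega, if_false]; exact hN n (by omega)⟩
    · ext ⟨x, y⟩
      by_cases hy : y = b <;>
        simp [young, hy, Prod.ext_iff] <;> omega

def Af (ℓ : ℕ) (f : ℕ → ℕ) (k i : ZMod ℓ) (b : ℕ) : ℤ :=
  if (b = 0 ∨ f b < f (b-1)) ∧ ((b : ZMod ℓ) + k - (f b : ZMod ℓ)) = i then 1 else 0

def Rf (ℓ : ℕ) (f : ℕ → ℕ) (k i : ZMod ℓ) (b : ℕ) : ℤ :=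
  if f (b+1) < f b ∧ ((b : ZMod ℓ) + k - (f b : ZMod ℓ)) + 1 = i then 1 else 0

def Gf (ℓ : ℕ) (f : ℕ → ℕ) (k i : ZMod ℓ) (b : ℕ) : ℤ :=
  (if ((b : ZMod ℓ) + k - (f b : ZMod ℓ)) = i then 1 else 0)
    - (if ((b : ZMod ℓ) + k) = i then 1 else 0)

def Cf (ℓ : ℕ) (f : ℕ → ℕ) (k i : ZMod ℓ) (b : ℕ) : ℤ :=
  (if ((b : ZMod ℓ) + k) + 1 = i then 1 else 0)
    - (if ((b : ZMod ℓ) + k - (f b : ZMod ℓ)) + 1 = i then 1 else 0)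
    - (if ((b : ZMod ℓ) + k) = i then 1 else 0)
    + (if ((b : ZMod ℓ) + k - (f b : ZMod ℓ)) = i then 1 else 0)

lemma key_sum (ℓ : ℕ) (hℓ : 2 ≤ ℓ) (f g : ℕ → ℕ)
    (hmono : ∀ m n : ℕ, m ≤ n → f n ≤ f m)
    (k i : ZMod ℓ) (B : ℕ) (hB : ∀ n, B ≤ n → f n = 0)
    (hg : ∀ b : ℕ, g b =
      if f (b+1) < f b ∧ nodeRes ℓ k (f b - 1, b) = i then f b - 1
      else if (b = 0 ∨ f b < f (b-1)) ∧ nodeRes ℓ k (f b, b) = i then f b + 1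
      else f b) :
    (∑ b ∈ Finset.range (B+1), (cnt ℓ i ((b : ZMod ℓ) + k) (g b) : ℤ))
      = (∑ b ∈ Finset.range (B+1), ((cnt ℓ (i-1) ((b : ZMod ℓ) + k) (f b) : ℤ)
          + cnt ℓ (i+1) ((b : ZMod ℓ) + k) (f b) - cnt ℓ i ((b : ZMod ℓ) + k) (f b)))
        + (if k = i then 1 else 0) := by
  haveI : Fact (1 < ℓ) := ⟨hℓ⟩
  have step1 : ∀ b : ℕ, (cnt ℓ i ((b : ZMod ℓ) + k) (g b) : ℤ)
      = cnt ℓ i ((b : ZMod ℓ) + k) (f b) + Af ℓ f k i b - Rf ℓ f k i b := by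
    intro b
    by_cases hRc : f (b+1) < f b ∧ nodeRes ℓ k (f b - 1, b) = i
    · have hpos : 0 < f b := by omega
      have hres : ((b : ZMod ℓ) + k - (f b : ZMod ℓ)) + 1 = i := by
        rw [← nodeRes_pred k b (f b) hpos]; exact hRc.2
      have hAz : Af ℓ f k i b = 0 := by
        unfold Af
        rw [if_neg]
        rintro ⟨-, h2⟩
        rw [h2] at hres
        exact one_ne_zero (by linear_combination hres : (1 : ZMod ℓ) = 0)
      have hRo : Rf ℓ f k i b = 1 := by
        unfold Rf; rw [if_pos ⟨hRc.1, hres⟩]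
      have hcnt : (cnt ℓ i ((b : ZMod ℓ) + k) (f b) : ℤ)
          = cnt ℓ i ((b : ZMod ℓ) + k) (f b - 1) + 1 := by
        conv_lhs => rw [show f b = (f b - 1) + 1 by omega]
        rw [cnt_succ,
          show ((b : ZMod ℓ) + k - ((f b - 1 : ℕ) : ZMod ℓ))
              = ((b : ZMod ℓ) + k - (f b : ZMod ℓ)) + 1 by
            rw [Nat.cast_sub (by omega : 1 ≤ f b), Nat.cast_one]; ring,
          if_pos hres]
        push_cast; ring
      rw [hg b, if_pos hRc, hAz, hRo]
      linarith [hcnt]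
    · by_cases hAc : (b = 0 ∨ f b < f (b-1)) ∧ nodeRes ℓ k (f b, b) = i
      · have hres : ((b : ZMod ℓ) + k - (f b : ZMod ℓ)) = i := by
          rw [← nodeRes_self k b (f b)]; exact hAc.2
        have hAo : Af ℓ f k i b = 1 := by unfold Af; rw [if_pos ⟨hAc.1, hres⟩]
        have hRz : Rf ℓ f k i b = 0 := by
          unfold Rf; rw [if_neg]
          rintro ⟨-, h2⟩
          rw [hres] at h2
          exact one_ne_zero (by linear_combination h2 : (1 : ZMod ℓ) = 0)
        rw [hg b, if_neg hRc, if_pos hAc, cnt_succ, if_pos hres, hAo, hRz]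
        push_cast; ring
      · have hAz : Af ℓ f k i b = 0 := by
          unfold Af; rw [if_neg]
          rintro ⟨h1, h2⟩
          exact hAc ⟨h1, by rw [nodeRes_self]; exact h2⟩
        have hRz : Rf ℓ f k i b = 0 := by
          unfold Rf; rw [if_neg]
          rintro ⟨h1, h2⟩
          exact hRc ⟨h1, by rw [nodeRes_pred k b (f b) (by omega)]; exact h2⟩
        rw [hg b, if_neg hRc, if_neg hAc, hAz, hRz]
        ring
  have step2 : ∀ b : ℕ, ((cnt ℓ (i-1) ((b : ZMod ℓ) + k) (f b) : ℤ)
      + cnt ℓ (i+1) ((b : ZMod ℓ) + k) (f b) - cnt ℓ i ((b : ZMod ℓ) + k) (f b))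
      = cnt ℓ i ((b : ZMod ℓ) + k) (f b) + Cf ℓ f k i b := by
    intro b
    have h1 := cnt_sub (i-1) ((b : ZMod ℓ) + k) (f b)
    rw [sub_add_cancel] at h1
    have h2 := cnt_sub i ((b : ZMod ℓ) + k) (f b)
    unfold Cf
    simp only [eq_sub_iff_add_eq] at h1
    linarith
  have step3 : ∀ b : ℕ, Af ℓ f k i (b+1) - Rf ℓ f k i b - Cf ℓ f k i b
      = Gf ℓ f k i (b+1) - Gf ℓ f k i b := by
    intro b
    have hle : f (b+1) ≤ f b := hmono b (b+1) (by omega)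
    have htc : ((b+1 : ℕ) : ZMod ℓ) + k = ((b : ZMod ℓ) + k) + 1 := by push_cast; ring
    rcases eq_or_lt_of_le hle with heq | hlt
    · have hAz : Af ℓ f k i (b+1) = 0 := by
        unfold Af; rw [if_neg]
        rintro ⟨h1 | h1, -⟩
        · omega
        · simp only [Nat.add_sub_cancel] at h1; omega
      have hRz : Rf ℓ f k i b = 0 := by
        unfold Rf; rw [if_neg]; rintro ⟨h1, -⟩; omega
      have huc : ((b+1 : ℕ) : ZMod ℓ) + k - (f (b+1) : ZMod ℓ)
          = (((b : ZMod ℓ) + k - (f b : ZMod ℓ))) + 1 := by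
        rw [← heq]; push_cast; ring
      rw [hAz, hRz]
      unfold Gf Cf
      rw [huc, htc]
      ring
    · have hiffA : ((b+1 = 0 ∨ f (b+1) < f (b+1-1)) ∧
          ((b+1 : ℕ) : ZMod ℓ) + k - (f (b+1) : ZMod ℓ) = i)
          ↔ (((b+1 : ℕ) : ZMod ℓ) + k - (f (b+1) : ZMod ℓ) = i) := by
        simp only [Nat.add_sub_cancel]
        constructor
        · rintro ⟨-, h⟩; exact h
        · intro h; exact ⟨Or.inr hlt, h⟩
      have hAv : Af ℓ f k i (b+1)
          = if ((b+1 : ℕ) : ZMod ℓ) + k - (f (b+1) : ZMod ℓ) = i then 1 else 0 := by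
        unfold Af
        rw [if_congr hiffA rfl rfl]
      have hiffR : (f (b+1) < f b ∧ ((b : ZMod ℓ) + k - (f b : ZMod ℓ)) + 1 = i)
          ↔ (((b : ZMod ℓ) + k - (f b : ZMod ℓ)) + 1 = i) := by
        constructor
        · rintro ⟨-, h⟩; exact h
        · intro h; exact ⟨hlt, h⟩
      have hRv : Rf ℓ f k i b
          = if ((b : ZMod ℓ) + k - (f b : ZMod ℓ)) + 1 = i then 1 else 0 := by
        unfold Rf
        rw [if_congr hiffR rfl rfl]
      rw [hAv, hRv]
      unfold Gf Cf
      rw [htc]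
      ring
  have hfB1 : f (B+1) = 0 := hB _ (by omega)
  have hfB : f B = 0 := hB _ (by omega)
  have hGB : Gf ℓ f k i (B+1) = 0 := by
    unfold Gf; rw [hfB1]; simp
  have hG0 : Gf ℓ f k i 0 = (if (k - (f 0 : ZMod ℓ)) = i then 1 else 0)
      - (if k = i then 1 else 0) := by
    unfold Gf; norm_num
  have hA0 : Af ℓ f k i 0 = (if (k - (f 0 : ZMod ℓ)) = i then 1 else 0) := by
    have hiff : ((0 = 0 ∨ f 0 < f (0-1)) ∧ (((0:ℕ) : ZMod ℓ) + k - (f 0 : ZMod ℓ)) = i)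
        ↔ (k - (f 0 : ZMod ℓ) = i) := by
      norm_num
    unfold Af
    rw [if_congr hiff rfl rfl]
  have hAB1 : Af ℓ f k i (B+1) = 0 := by
    unfold Af; rw [if_neg]
    rintro ⟨h1 | h1, -⟩
    · omega
    · simp only [Nat.add_sub_cancel] at h1; omega
  have hsplit : ∑ b ∈ Finset.range (B+1), Af ℓ f k i b
      = (∑ b ∈ Finset.range (B+1), Af ℓ f k i (b+1)) + Af ℓ f k i 0 - Af ℓ f k i (B+1) := by
    rw [Finset.sum_range_succ' (Af ℓ f k i) B,
      Finset.sum_range_succ (fun b => Af ℓ f k i (b+1)) B]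
    ring
  have htel : (∑ b ∈ Finset.range (B+1), Af ℓ f k i (b+1))
      - (∑ b ∈ Finset.range (B+1), Rf ℓ f k i b)
      - (∑ b ∈ Finset.range (B+1), Cf ℓ f k i b)
      = Gf ℓ f k i (B+1) - Gf ℓ f k i 0 := by
    rw [← Finset.sum_sub_distrib, ← Finset.sum_sub_distrib]
    calc ∑ b ∈ Finset.range (B+1), (Af ℓ f k i (b+1) - Rf ℓ f k i b - Cf ℓ f k i b)
        = ∑ b ∈ Finset.range (B+1), (Gf ℓ f k i (b+1) - Gf ℓ f k i b) :=
          Finset.sum_congr rfl (fun b _ => step3 b)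
      _ = _ := Finset.sum_range_sub (Gf ℓ f k i) (B+1)
  have e1 : (∑ b ∈ Finset.range (B+1), (cnt ℓ i ((b : ZMod ℓ) + k) (g b) : ℤ))
      = (∑ b ∈ Finset.range (B+1), (cnt ℓ i ((b : ZMod ℓ) + k) (f b) : ℤ))
        + (∑ b ∈ Finset.range (B+1), Af ℓ f k i b)
        - (∑ b ∈ Finset.range (B+1), Rf ℓ f k i b) := by
    rw [← Finset.sum_add_distrib, ← Finset.sum_sub_distrib]
    exact Finset.sum_congr rfl (fun b _ => step1 b)
  have e2 : (∑ b ∈ Finset.range (B+1), ((cnt ℓ (i-1) ((b : ZMod ℓ) + k) (f b) : ℤ)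
        + cnt ℓ (i+1) ((b : ZMod ℓ) + k) (f b) - cnt ℓ i ((b : ZMod ℓ) + k) (f b)))
      = (∑ b ∈ Finset.range (B+1), (cnt ℓ i ((b : ZMod ℓ) + k) (f b) : ℤ))
        + (∑ b ∈ Finset.range (B+1), Cf ℓ f k i b) := by
    rw [← Finset.sum_add_distrib]
    exact Finset.sum_congr rfl (fun b _ => step2 b)
  rw [e1, e2]
  rw [hGB, hG0] at htel
  rw [hA0] at hsplit
  rw [hAB1] at hsplit
  linarith [htel, hsplit]

lemma mRes_eq (ℓ : ℕ) {r : ℕ} (Λ : Fin r → ℕ → ℕ) (s : Fin r → ZMod ℓ) (j : ZMod ℓ)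
    (A B : ℕ) (hA : ∀ c n, Λ c n < A) (hB : ∀ c n, B ≤ n → Λ c n = 0) :
    mRes ℓ Λ s j
      = ∑ c : Fin r, ∑ b ∈ Finset.range B, (cnt ℓ j ((b : ZMod ℓ) + s c) (Λ c b) : ℤ) := by
  classical
  set F : Finset (ℕ × ℕ × Fin r) :=
    (Finset.range A ×ˢ Finset.range B ×ˢ Finset.univ).filter
      (fun q => q.1 < Λ q.2.2 q.2.1 ∧ nodeRes ℓ (s q.2.2) (q.1, q.2.1) = j) with hF
  have hset : mNodes Λ ∩ {q : ℕ × ℕ × Fin r | nodeRes ℓ (s q.2.2) (q.1, q.2.1) = j}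
      = (F : Set (ℕ × ℕ × Fin r)) := by
    ext ⟨a, b, c⟩
    simp only [hF, Set.mem_inter_iff, Set.mem_setOf_eq, Finset.coe_filter,
      Finset.mem_product, Finset.mem_range, Finset.mem_univ, and_true, mNodes]
    constructor
    · rintro ⟨h1, h2⟩
      refine ⟨⟨lt_trans h1 (hA c b), ?_⟩, h1, h2⟩
      by_contra h
      push_neg at h
      have h3 := hB c b h
      omega
    · rintro ⟨-, h1, h2⟩
      exact ⟨h1, h2⟩
  have hfil : ∀ (b : ℕ) (c : Fin r), (Finset.range A).filter
        (fun a => a < Λ c b ∧ nodeRes ℓ (s c) (a, b) = j)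
      = (Finset.range (Λ c b)).filter
        (fun a : ℕ => ((b : ZMod ℓ) + s c) - (a : ZMod ℓ) = j) := by
    intro b c
    ext a
    simp only [Finset.mem_filter, Finset.mem_range]
    constructor
    · rintro ⟨-, h1, h2⟩
      refine ⟨h1, ?_⟩
      rw [← h2]
      unfold nodeRes
      push_cast
      ring
    · rintro ⟨h1, h2⟩
      refine ⟨lt_trans h1 (hA c b), h1, ?_⟩
      rw [← h2]
      unfold nodeRes
      push_cast
      ring
  have hcard : F.card
      = ∑ c : Fin r, ∑ b ∈ Finset.range B, cnt ℓ j ((b : ZMod ℓ) + s c) (Λ c b) := by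
    calc F.card
        = ∑ a ∈ Finset.range A, ∑ b ∈ Finset.range B, ∑ c : Fin r,
            (if a < Λ c b ∧ nodeRes ℓ (s c) (a, b) = j then 1 else 0) := by
          rw [hF, Finset.card_filter, Finset.sum_product]
          exact Finset.sum_congr rfl fun a _ => by rw [Finset.sum_product]
      _ = ∑ b ∈ Finset.range B, ∑ a ∈ Finset.range A, ∑ c : Fin r,
            (if a < Λ c b ∧ nodeRes ℓ (s c) (a, b) = j then 1 else 0) := Finset.sum_comm
      _ = ∑ b ∈ Finset.range B, ∑ c : Fin r, ∑ a ∈ Finset.range A,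
            (if a < Λ c b ∧ nodeRes ℓ (s c) (a, b) = j then 1 else 0) :=
          Finset.sum_congr rfl fun b _ => Finset.sum_comm
      _ = ∑ c : Fin r, ∑ b ∈ Finset.range B, ∑ a ∈ Finset.range A,
            (if a < Λ c b ∧ nodeRes ℓ (s c) (a, b) = j then 1 else 0) := Finset.sum_comm
      _ = ∑ c : Fin r, ∑ b ∈ Finset.range B, cnt ℓ j ((b : ZMod ℓ) + s c) (Λ c b) := by
          refine Finset.sum_congr rfl fun c _ => Finset.sum_congr rfl fun b _ => ?_
          rw [← Finset.card_filter, hfil b c]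
          rfl
  unfold mRes
  rw [hset, Set.ncard_coe_finset, hcard]
  push_cast
  rfl

theorem stmt_5 (ℓ r : ℕ) (hℓ : 2 ≤ ℓ) (Λ M : Fin r → ℕ → ℕ)
    (hΛ : ∀ c, IsPartition (Λ c)) (hM : ∀ c, IsPartition (M c))
    (s : Fin r → ZMod ℓ) (i : ZMod ℓ)
    (hact : ∀ c : Fin r, young (M c) =
      (young (Λ c) \
        {p : ℕ × ℕ | IsRemovable (Λ c) p ∧ nodeRes ℓ (s c) p = i}) ∪
        {p : ℕ × ℕ | IsAddable (Λ c) p ∧ nodeRes ℓ (s c) p = i}) :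
    (∀ j : ZMod ℓ, j ≠ i → mRes ℓ M s j = mRes ℓ Λ s j) ∧
    mRes ℓ M s i =
      mRes ℓ Λ s (i - 1) + mRes ℓ Λ s (i + 1) - mRes ℓ Λ s i + wMulti ℓ s i := by
  haveI : Fact (1 < ℓ) := ⟨hℓ⟩
  have hmem : ∀ (c : Fin r) (b x : ℕ), x < M c b ↔
      ((x < Λ c b ∧ ¬(IsRemovable (Λ c) (x,b) ∧ nodeRes ℓ (s c) (x,b) = i))
        ∨ (IsAddable (Λ c) (x,b) ∧ nodeRes ℓ (s c) (x,b) = i)) := by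
    intro c b x
    have h := Set.ext_iff.mp (hact c) (x, b)
    simpa [young, Set.mem_diff, Set.mem_union, Set.mem_setOf_eq] using h
  have clash : ∀ (k : ZMod ℓ) (b m : ℕ), 0 < m →
      nodeRes ℓ k (m, b) = i → nodeRes ℓ k (m-1, b) = i → False := by
    intro k b m hm h1 h2
    rw [nodeRes_self] at h1
    rw [nodeRes_pred k b m hm, h1] at h2
    exact one_ne_zero (by linear_combination h2 : (1 : ZMod ℓ) = 0)
  have hcol : ∀ (c : Fin r) (b : ℕ), M c b =
      if Λ c (b+1) < Λ c b ∧ nodeRes ℓ (s c) (Λ c b - 1, b) = i then Λ c b - 1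
      else if (b = 0 ∨ Λ c b < Λ c (b-1)) ∧ nodeRes ℓ (s c) (Λ c b, b) = i then Λ c b + 1
      else Λ c b := by
    intro c b
    by_cases hRc : Λ c (b+1) < Λ c b ∧ nodeRes ℓ (s c) (Λ c b - 1, b) = i
    · rw [if_pos hRc]
      have hpos : 0 < Λ c b := by omega
      have hx : ∀ x, x < M c b ↔ x < Λ c b - 1 := by
        intro x
        rw [hmem c b x]
        constructor
        · rintro (⟨h1, h2⟩ | ⟨h1, h2⟩)
          · by_contra hc
            push_neg at hc
            have hx1 : x = Λ c b - 1 := by omega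
            refine h2 ⟨(removable_iff (hΛ c) x b).mpr ⟨by omega, hRc.1⟩, ?_⟩
            rw [hx1]
            exact hRc.2
          · exfalso
            have hx1 : x = Λ c b := ((addable_iff (hΛ c) x b).mp h1).1
            apply clash (s c) b (Λ c b) hpos
            · rw [← hx1]; exact h2
            · exact hRc.2
        · intro hxlt
          left
          refine ⟨by omega, ?_⟩
          rintro ⟨hrem, -⟩
          have := ((removable_iff (hΛ c) x b).mp hrem).1
          omega
      have e1 := hx (M c b)
      have e2 := hx (Λ c b - 1)
      omega
    · rw [if_neg hRc]
      by_cases hAc : (b = 0 ∨ Λ c b < Λ c (b-1)) ∧ nodeRes ℓ (s c) (Λ c b, b) = i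
      · rw [if_pos hAc]
        have hx : ∀ x, x < M c b ↔ x < Λ c b + 1 := by
          intro x
          rw [hmem c b x]
          constructor
          · rintro (⟨h1, -⟩ | ⟨h1, -⟩)
            · omega
            · have hx1 : x = Λ c b := ((addable_iff (hΛ c) x b).mp h1).1
              omega
          · intro hxlt
            by_cases hxe : x < Λ c b
            · left
              refine ⟨hxe, ?_⟩
              rintro ⟨hrem, hres⟩
              have h5 := (removable_iff (hΛ c) x b).mp hrem
              apply clash (s c) b (Λ c b) (by omega)
              · exact hAc.2
              · rw [show Λ c b - 1 = x by omega]
                exact hres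
            · have hx1 : x = Λ c b := by omega
              right
              refine ⟨(addable_iff (hΛ c) x b).mpr ⟨hx1, hAc.1⟩, ?_⟩
              rw [hx1]
              exact hAc.2
        have e1 := hx (M c b)
        have e2 := hx (Λ c b + 1)
        omega
      · rw [if_neg hAc]
        have hx : ∀ x, x < M c b ↔ x < Λ c b := by
          intro x
          rw [hmem c b x]
          constructor
          · rintro (⟨h1, -⟩ | ⟨h1, h2⟩)
            · exact h1
            · exfalso
              have h5 := (addable_iff (hΛ c) x b).mp h1
              apply hAc
              refine ⟨h5.2, ?_⟩
              rw [← h5.1]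
              exact h2
          · intro hxlt
            left
            refine ⟨hxlt, ?_⟩
            rintro ⟨hrem, hres⟩
            have h5 := (removable_iff (hΛ c) x b).mp hrem
            apply hRc
            refine ⟨h5.2, ?_⟩
            rw [show Λ c b - 1 = x by omega]
            exact hres
        have e1 := hx (M c b)
        have e2 := hx (Λ c b)
        omega
  constructor
  · -- part 1
    intro j hj
    have hsets : mNodes M ∩ {q : ℕ × ℕ × Fin r | nodeRes ℓ (s q.2.2) (q.1, q.2.1) = j}
        = mNodes Λ ∩ {q : ℕ × ℕ × Fin r | nodeRes ℓ (s q.2.2) (q.1, q.2.1) = j} := by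
      ext ⟨a, b, c⟩
      simp only [mNodes, Set.mem_inter_iff, Set.mem_setOf_eq]
      constructor
      · rintro ⟨h1, h2⟩
        refine ⟨?_, h2⟩
        rcases (hmem c b a).mp h1 with ⟨h3, -⟩ | ⟨-, h4⟩
        · exact h3
        · exact absurd (h2.symm.trans h4) hj
      · rintro ⟨h1, h2⟩
        refine ⟨(hmem c b a).mpr (Or.inl ⟨h1, ?_⟩), h2⟩
        rintro ⟨-, h4⟩
        exact hj (h2.symm.trans h4)
    unfold mRes
    rw [hsets]
  · -- part 2
    have hbnd : ∀ c : Fin r, ∃ Nc : ℕ, ∀ n, Nc ≤ n → Λ c n = 0 ∧ M c n = 0 := by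
      intro c
      obtain ⟨N1, h1⟩ := (hΛ c).2
      obtain ⟨N2, h2⟩ := (hM c).2
      exact ⟨max N1 N2, fun n hn => ⟨h1 n (by omega), h2 n (by omega)⟩⟩
    choose Nf hNf using hbnd
    classical
    set B := Finset.univ.sup Nf with hBdef
    have hBΛ : ∀ (c : Fin r) (n : ℕ), B ≤ n → Λ c n = 0 := fun c n h =>
      (hNf c n (le_trans (Finset.le_sup (Finset.mem_univ c)) h)).1
    have hBM : ∀ (c : Fin r) (n : ℕ), B ≤ n → M c n = 0 := fun c n h =>
      (hNf c n (le_trans (Finset.le_sup (Finset.mem_univ c)) h)).2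
    set A := (Finset.univ.sup fun c : Fin r => max (Λ c 0) (M c 0)) + 1 with hAdef
    have hAΛ : ∀ (c : Fin r) (n : ℕ), Λ c n < A := by
      intro c n
      have h1 : Λ c n ≤ Λ c 0 := (hΛ c).1 0 n (Nat.zero_le n)
      have h2 : max (Λ c 0) (M c 0) ≤ Finset.univ.sup (fun c : Fin r => max (Λ c 0) (M c 0)) :=
        Finset.le_sup (f := fun c : Fin r => max (Λ c 0) (M c 0)) (Finset.mem_univ c)
      omega
    have hAM : ∀ (c : Fin r) (n : ℕ), M c n < A := by
      intro c n
      have h1 : M c n ≤ M c 0 := (hM c).1 0 n (Nat.zero_le n)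
      have h2 : max (Λ c 0) (M c 0) ≤ Finset.univ.sup (fun c : Fin r => max (Λ c 0) (M c 0)) :=
        Finset.le_sup (f := fun c : Fin r => max (Λ c 0) (M c 0)) (Finset.mem_univ c)
      omega
    have hw : wMulti ℓ s i = ∑ c : Fin r, (if s c = i then (1:ℤ) else 0) := by
      unfold wMulti
      rw [Finset.card_filter]
      push_cast
      rfl
    rw [mRes_eq ℓ M s i A (B+1) hAM (fun c n h => hBM c n (by omega)),
      mRes_eq ℓ Λ s (i-1) A (B+1) hAΛ (fun c n h => hBΛ c n (by omega)),
      mRes_eq ℓ Λ s (i+1) A (B+1) hAΛ (fun c n h => hBΛ c n (by omega)),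
      mRes_eq ℓ Λ s i A (B+1) hAΛ (fun c n h => hBΛ c n (by omega)), hw]
    have key : ∀ c : Fin r,
        (∑ b ∈ Finset.range (B+1), (cnt ℓ i ((b : ZMod ℓ) + s c) (M c b) : ℤ))
        = (∑ b ∈ Finset.range (B+1), (cnt ℓ (i-1) ((b : ZMod ℓ) + s c) (Λ c b) : ℤ))
          + (∑ b ∈ Finset.range (B+1), (cnt ℓ (i+1) ((b : ZMod ℓ) + s c) (Λ c b) : ℤ))
          - (∑ b ∈ Finset.range (B+1), (cnt ℓ i ((b : ZMod ℓ) + s c) (Λ c b) : ℤ))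
          + (if s c = i then 1 else 0) := by
      intro c
      rw [key_sum ℓ hℓ (Λ c) (M c) (hΛ c).1 (s c) i B (fun n hn => hBΛ c n hn) (hcol c)]
      rw [Finset.sum_sub_distrib, Finset.sum_add_distrib]
    calc (∑ c : Fin r, ∑ b ∈ Finset.range (B+1), (cnt ℓ i ((b : ZMod ℓ) + s c) (M c b) : ℤ))
        = ∑ c : Fin r,
          ((∑ b ∈ Finset.range (B+1), (cnt ℓ (i-1) ((b : ZMod ℓ) + s c) (Λ c b) : ℤ))
          + (∑ b ∈ Finset.range (B+1), (cnt ℓ (i+1) ((b : ZMod ℓ) + s c) (Λ c b) : ℤ))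
          - (∑ b ∈ Finset.range (B+1), (cnt ℓ i ((b : ZMod ℓ) + s c) (Λ c b) : ℤ))
          + (if s c = i then 1 else 0)) := Finset.sum_congr rfl fun c _ => key c
      _ = _ := by
          rw [Finset.sum_add_distrib, Finset.sum_sub_distrib, Finset.sum_add_distrib]
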